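/- arXiv:2403.08039 — 5 statements merged into one kernel-verified Lean document; each statement's English description precedes it below -/
import Mathlib

section
/- The function g₂ : K² → K defined by g₂(w₁,w₂) = w₁ if |w₂| ≤ |w₁| and g₂(w₁,w₂) = w₂ if |w₁| < |w₂| is continuous, and g₂(w₁,w₂) = 0 if and only if w₁ = w₂ = 0. -/
open IsUltrametricDist in
lemma g2_aux_norm_eq {K : Type*} [NormedField K] [IsUltrametricDist K] {x y : K}
    (h : ‖y - x‖ < ‖x‖) : ‖y‖ = ‖x‖ := by
  have h1 : ‖y‖ ≤ ‖x‖ := by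
    calc ‖y‖ = ‖x + (y - x)‖ := by ring_nf
    _ ≤ max ‖x‖ ‖y - x‖ := norm_add_le_max _ _
    _ = ‖x‖ := max_eq_left h.le
  refine le_antisymm h1 ?_
  by_contra hlt
  push_neg at hlt
  have h2 : ‖x‖ = ‖y + (x - y)‖ := by ring_nf
  have h3 : ‖x - y‖ = ‖y - x‖ := by rw [← norm_neg]; ring_nf
  have h4 := norm_add_le_max y (x - y)
  rw [← h2, h3] at h4
  exact absurd h4 (not_le.mpr (max_lt hlt h))

/-- The function `g₂(w₁,w₂) = w₁` if `|w₂| ≤ |w₁|`, else `w₂`, on a non-Archimedean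
valued field is continuous and vanishes exactly at the origin. -/
theorem g2_continuous_and_zero_iff {K : Type*} [NormedField K] [IsUltrametricDist K] :
    Continuous (fun w : K × K => if ‖w.2‖ ≤ ‖w.1‖ then w.1 else w.2) ∧
      ∀ w : K × K, (if ‖w.2‖ ≤ ‖w.1‖ then w.1 else w.2) = 0 ↔ w = 0 := by
  set f : K × K → K := fun w => if ‖w.2‖ ≤ ‖w.1‖ then w.1 else w.2 with hf
  constructor
  · rw [continuous_iff_continuousAt]
    intro a
    by_cases ha : a = 0
    · subst ha
      rw [ContinuousAt]
      simp only [f, Prod.fst_zero, Prod.snd_zero, norm_zero, le_refl, if_pos]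
      rw [NormedAddCommGroup.tendsto_nhds_zero]
      intro ε hε
      have h1 : ∀ᶠ w : K × K in nhds 0, ‖w.1‖ < ε ∧ ‖w.2‖ < ε := by
        have := (Metric.ball_mem_nhds (0 : K × K) hε)
        filter_upwards [this] with w hw
        rw [Metric.mem_ball, dist_zero_right, Prod.norm_def] at hw
        exact ⟨(le_max_left _ _).trans_lt hw, (le_max_right _ _).trans_lt hw⟩
      filter_upwards [h1] with w hw
      by_cases h : ‖w.2‖ ≤ ‖w.1‖ <;> simp only [f, h, if_true, if_false] <;>
        [exact hw.1; exact hw.2]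
    · -- a ≠ 0: the condition is eventually constant
      have key : ∀ᶠ w : K × K in nhds a, (‖w.2‖ ≤ ‖w.1‖) = (‖a.2‖ ≤ ‖a.1‖) := by
        have hpos : 0 < max ‖a.1‖ ‖a.2‖ := by
          rcases Prod.mk.injEq a.1 a.2 0 0 ▸ ha with h
          by_contra hc
          push_neg at hc
          rw [max_le_iff] at hc
          exact ha (Prod.ext (norm_le_zero_iff.mp hc.1) (norm_le_zero_iff.mp hc.2))
        by_cases h1 : a.1 = 0
        · -- then a.2 ≠ 0, condition is false at a and nearby
          have h2 : a.2 ≠ 0 := fun h2 => ha (Prod.ext h1 h2)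
          have h2p : 0 < ‖a.2‖ := norm_pos_iff.mpr h2
          have hb : Metric.ball a ‖a.2‖ ∈ nhds a := Metric.ball_mem_nhds a h2p
          filter_upwards [hb] with w hw
          rw [Metric.mem_ball, Prod.dist_eq, max_lt_iff] at hw
          have hw2 : ‖w.2‖ = ‖a.2‖ := g2_aux_norm_eq (by rw [← dist_eq_norm]; exact hw.2)
          have hw1 : ‖w.1‖ < ‖a.2‖ := by
            have : dist w.1 a.1 = ‖w.1‖ := by rw [h1, dist_zero_right]
            rw [← this]; exact hw.1
          simp only [eq_iff_iff]
          constructor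
          · intro hcc; exact absurd (hw2 ▸ hcc) (not_le.mpr hw1)
          · intro hcc; rw [h1, norm_zero] at hcc
            exact absurd hcc (not_le.mpr h2p)
        · by_cases h2 : a.2 = 0
          · -- condition true at a and nearby
            have h1p : 0 < ‖a.1‖ := norm_pos_iff.mpr h1
            filter_upwards [Metric.ball_mem_nhds a h1p] with w hw
            rw [Metric.mem_ball, Prod.dist_eq, max_lt_iff] at hw
            have hw1 : ‖w.1‖ = ‖a.1‖ := g2_aux_norm_eq (by rw [← dist_eq_norm]; exact hw.1)
            have hw2 : ‖w.2‖ < ‖a.1‖ := by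
              have : dist w.2 a.2 = ‖w.2‖ := by rw [h2, dist_zero_right]
              rw [← this]; exact hw.2
            simp only [eq_iff_iff]
            constructor
            · intro _; rw [h2, norm_zero]; positivity
            · intro _; rw [hw1]; exact hw2.le
          · -- both nonzero: both norms locally constant
            have h1p : 0 < ‖a.1‖ := norm_pos_iff.mpr h1
            have h2p : 0 < ‖a.2‖ := norm_pos_iff.mpr h2
            filter_upwards [Metric.ball_mem_nhds a (lt_min h1p h2p)] with w hw
            rw [Metric.mem_ball, Prod.dist_eq, max_lt_iff] at hw
            have hw1 : ‖w.1‖ = ‖a.1‖ :=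
              g2_aux_norm_eq (by rw [← dist_eq_norm]; exact hw.1.trans_le (min_le_left _ _))
            have hw2 : ‖w.2‖ = ‖a.2‖ :=
              g2_aux_norm_eq (by rw [← dist_eq_norm]; exact hw.2.trans_le (min_le_right _ _))
            rw [hw1, hw2]
      by_cases hc : ‖a.2‖ ≤ ‖a.1‖
      · have : f =ᶠ[nhds a] Prod.fst := by
          filter_upwards [key] with w hw
          simp only [f, hw, hc, if_true]
        exact (continuous_fst.continuousAt).congr this.symm
      · have : f =ᶠ[nhds a] Prod.snd := by
          filter_upwards [key] with w hw
          simp only [f, hw, hc, if_false]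
        exact (continuous_snd.continuousAt).congr this.symm
  · intro w
    constructor
    · intro h
      by_cases hc : ‖w.2‖ ≤ ‖w.1‖
      · simp only [f, hc, if_true] at h
        have : ‖w.2‖ ≤ 0 := by rwa [h, norm_zero] at hc
        exact Prod.ext h (norm_le_zero_iff.mp this)
      · simp only [f, hc, if_false] at h
        push_neg at hc
        rw [h, norm_zero] at hc
        exact absurd hc (not_lt.mpr (norm_nonneg _))
    · rintro rfl
      simp [f]
end

section
/- For every t ≥ 2 there exists a continuous function g_t : K^t → K such that g_t(w) = 0 if and only if w = 0; it can be defined inductively by g₂(w₁,w₂) = w₁ if |w₂| ≤ |w₁|, else w₂, and g_{t+1}(w₁,…,w_{t+1}) = g₂(g_t(w₁,…,w_t), w_{t+1}). -/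
open IsUltrametricDist

private lemma ultra_norm_eq {K : Type*} [NormedField K] [IsUltrametricDist K]
    {x a : K} (h : ‖x - a‖ < ‖a‖) : ‖x‖ = ‖a‖ := by
  have h1 : ‖x‖ ≤ ‖a‖ := by
    calc ‖x‖ = ‖a + (x - a)‖ := by ring_nf
    _ ≤ max ‖a‖ ‖x - a‖ := norm_add_le_max _ _
    _ ≤ ‖a‖ := max_le le_rfl h.le
  refine le_antisymm h1 ?_
  by_contra hlt
  push_neg at hlt
  have : ‖a‖ ≤ max ‖x‖ ‖x - a‖ := by
    calc ‖a‖ = ‖x - (x - a)‖ := by ring_nf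
    _ = ‖x + (-(x - a))‖ := by ring_nf
    _ ≤ max ‖x‖ ‖-(x - a)‖ := norm_add_le_max _ _
    _ = max ‖x‖ ‖x - a‖ := by rw [norm_neg]
  exact absurd this (by simp [not_le, hlt, h])

private noncomputable def gtwo {K : Type*} [NormedField K] (p : K × K) : K :=
  if ‖p.2‖ ≤ ‖p.1‖ then p.1 else p.2

private lemma gtwo_zero_iff {K : Type*} [NormedField K] (p : K × K) :
    gtwo p = 0 ↔ p = 0 := by
  rcases p with ⟨a, b⟩
  unfold gtwo
  constructor
  · intro h
    rw [Prod.mk_eq_zero]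
    split_ifs at h with hab
    · subst h
      simp only [norm_zero, norm_le_zero_iff] at hab
      exact ⟨rfl, hab⟩
    · subst h
      push_neg at hab
      simp only [norm_zero] at hab
      exact absurd (norm_nonneg a) (by simpa using hab.not_ge)
  · intro h
    simp only [Prod.mk_eq_zero] at h
    simp [h.1, h.2]

private lemma gtwo_cont {K : Type*} [NormedField K] [IsUltrametricDist K] :
    Continuous (gtwo (K := K)) := by
  rw [continuous_iff_continuousAt]
  rintro ⟨a, b⟩
  by_cases hz : a = 0 ∧ b = 0
  · obtain ⟨rfl, rfl⟩ := hz
    have h0 : gtwo ((0 : K), (0 : K)) = 0 := by simp [gtwo]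
    rw [ContinuousAt, h0]
    have hb : ∀ p : K × K, ‖gtwo p‖ ≤ max ‖p.1‖ ‖p.2‖ := by
      intro p
      unfold gtwo
      split_ifs
      · exact le_max_left _ _
      · exact le_max_right _ _
    have ht : Filter.Tendsto (fun p : K × K => max ‖p.1‖ ‖p.2‖)
        (nhds ((0 : K), (0 : K))) (nhds 0) := by
      have := ((continuous_fst.norm.max continuous_snd.norm).tendsto ((0 : K), (0 : K)))
      simpa using this
    exact squeeze_zero_norm hb ht
  · set r : ℝ := max ‖a‖ ‖b‖ with hr
    have hrpos : 0 < r := by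
      rcases not_and_or.mp hz with h | h
      · exact lt_of_lt_of_le (norm_pos_iff.mpr h) (le_max_left _ _)
      · exact lt_of_lt_of_le (norm_pos_iff.mpr h) (le_max_right _ _)
    by_cases hab : ‖b‖ ≤ ‖a‖
    · -- near (a,b), gtwo = fst
      have ha : ‖a‖ = r := le_antisymm (le_max_left _ _) (max_le le_rfl hab)
      have heq : gtwo =ᶠ[nhds ((a : K), b)] Prod.fst := by
        filter_upwards [Metric.ball_mem_nhds (a, b) hrpos] with p hp
        have h1 : dist p.1 a < r := lt_of_le_of_lt (le_trans (le_max_left _ _)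
          (le_of_eq (Prod.dist_eq (x := p) (y := (a, b))).symm)) hp
        have h2 : dist p.2 b < r := lt_of_le_of_lt (le_trans (le_max_right _ _)
          (le_of_eq (Prod.dist_eq (x := p) (y := (a, b))).symm)) hp
        have hp1 : ‖p.1‖ = r := by
          rw [← ha]; exact ultra_norm_eq (by rwa [← dist_eq_norm, ha])
        have hp2 : ‖p.2‖ ≤ r := by
          calc ‖p.2‖ = ‖b + (p.2 - b)‖ := by ring_nf
          _ ≤ max ‖b‖ ‖p.2 - b‖ := norm_add_le_max _ _
          _ ≤ r := max_le (le_max_right _ _) (by rw [← dist_eq_norm]; exact h2.le)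
        have : ‖p.2‖ ≤ ‖p.1‖ := by rw [hp1]; exact hp2
        simp [gtwo, this]
      exact (continuousAt_fst).congr heq.symm
    · -- near (a,b), gtwo = snd
      push_neg at hab
      have hb : ‖b‖ = r := le_antisymm (le_max_right _ _) (max_le hab.le le_rfl)
      have heq : gtwo =ᶠ[nhds ((a : K), b)] Prod.snd := by
        filter_upwards [Metric.ball_mem_nhds (a, b)
          (lt_min (sub_pos.mpr (by rwa [hb] at hab)) hrpos)] with p hp
        have h1 : dist p.1 a < min (r - ‖a‖) r := lt_of_le_of_lt (le_trans (le_max_left _ _)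
          (le_of_eq (Prod.dist_eq (x := p) (y := (a, b))).symm)) hp
        have h2 : dist p.2 b < min (r - ‖a‖) r := lt_of_le_of_lt (le_trans (le_max_right _ _)
          (le_of_eq (Prod.dist_eq (x := p) (y := (a, b))).symm)) hp
        have hp2 : ‖p.2‖ = r := by
          rw [← hb]
          exact ultra_norm_eq (by rw [← dist_eq_norm, hb]; exact lt_of_lt_of_le h2 (min_le_right _ _))
        have hp1 : ‖p.1‖ < r := by
          calc ‖p.1‖ = ‖a + (p.1 - a)‖ := by ring_nf
          _ ≤ max ‖a‖ ‖p.1 - a‖ := norm_add_le_max _ _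
          _ < r := max_lt (by rwa [hb] at hab)
              (by rw [← dist_eq_norm]; exact lt_of_lt_of_le h1 (min_le_right _ _))
        have : ¬ ‖p.2‖ ≤ ‖p.1‖ := by rw [hp2]; exact not_le.mpr hp1
        simp [gtwo, this]
      exact (continuousAt_snd).congr heq.symm

private lemma aux_exists {K : Type*} [NormedField K] [IsUltrametricDist K] :
    ∀ t : ℕ, 1 ≤ t → ∃ g : (Fin t → K) → K, Continuous g ∧
      ∀ w : Fin t → K, g w = 0 ↔ w = 0 := by
  intro t ht
  induction t, ht using Nat.le_induction with
  | base =>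
    refine ⟨fun w => w 0, continuous_apply 0, fun w => ?_⟩
    constructor
    · intro h
      funext i
      fin_cases i
      exact h
    · rintro rfl; rfl
  | succ n hn ih =>
    obtain ⟨g, hgc, hgz⟩ := ih
    refine ⟨fun w => gtwo (g (fun i => w i.castSucc), w (Fin.last n)), ?_, ?_⟩
    · exact gtwo_cont.comp ((hgc.comp (by continuity)).prodMk (continuous_apply _))
    · intro w
      rw [gtwo_zero_iff, Prod.mk_eq_zero, hgz]
      constructor
      · rintro ⟨h1, h2⟩
        funext i
        refine Fin.lastCases h2 (fun j => ?_) i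
        exact congrFun h1 j
      · rintro rfl
        exact ⟨by funext j; rfl, rfl⟩

/-- For every `t ≥ 2` there is a continuous function `g_t : K^t → K` vanishing
exactly at the origin. -/
theorem exists_continuous_vanishing_only_at_zero {K : Type*} [NormedField K]
    [IsUltrametricDist K] :
    ∀ t : ℕ, 2 ≤ t → ∃ g : (Fin t → K) → K, Continuous g ∧
      ∀ w : Fin t → K, g w = 0 ↔ w = 0 := by
  intro t ht
  exact aux_exists t (le_trans one_le_two ht)
end

section
/- With A₁, A₂ closed in K^n and U₁ = ⋃{ B(x,r) : x ∈ A₁\A₂, 0 < r < dist(x,A₂) }, the set U₁ ∪ (A₁ ∩ A₂) is closed in K^n. -/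
/-! In an ultrametric space `d(·, A₂)` is constant on every ball of radius `< d(x, A₂)` around `x`,
so `y` lies in a ball `B(x, r)` with `x ∈ A₁ \ A₂`, `r < d(x, A₂)` exactly when
`d(y, A₁) < d(y, A₂)`. The set in question is therefore `A₁ ∪ {d(·, A₁) < d(·, A₂)}`. Its complement
is open: if `y ∉ A₁` and `d(y, A₂) ≤ d(y, A₁)`, then on the ball of radius `d(y, A₁)` around `y` the
function `d(·, A₁)` is constant, while `d(w, A₂) ≤ max(d(w, y), d(y, A₂)) ≤ d(y, A₁)`. -/

open Metric

namespace IsUltrametricDist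

variable {X : Type*} [PseudoMetricSpace X] [IsUltrametricDist X]

lemma edist_triangle_max (x y z : X) : edist x z ≤ max (edist x y) (edist y z) := by
  simpa only [edist_dist, ENNReal.ofReal_max] using
    ENNReal.ofReal_le_ofReal (dist_triangle_max x y z)

lemma infEDist_le_max (s : Set X) (y z : X) :
    infEDist y s ≤ max (edist y z) (infEDist z s) :=
  calc
    ⨅ a ∈ s, edist y a ≤ ⨅ a ∈ s, max (edist y z) (edist z a) :=
      iInf₂_mono fun a _ => edist_triangle_max y z a
    _ = max (edist y z) (⨅ a ∈ s, edist z a) := sup_iInf₂_eq _ |>.symm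

lemma infEDist_eq_of_edist_lt {s : Set X} {y z : X} (h : edist y z < infEDist z s) :
    infEDist y s = infEDist z s := by
  refine le_antisymm ((infEDist_le_max s y z).trans (max_le h.le le_rfl)) ?_
  by_contra! hlt
  exact ((infEDist_le_max s z y).trans_lt (max_lt (by rwa [edist_comm]) hlt)).false

lemma iUnion_eball_infEDist_eq (s t : Set X) :
    ⋃ x ∈ s \ t, ⋃ r ∈ Set.Iio (infEDist x t), eball x r = {y | infEDist y s < infEDist y t} := by
  ext y
  simp only [Set.mem_iUnion, Set.mem_sdiff, Set.mem_Iio, mem_eball, exists_prop, Set.mem_ofPred_eq]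
  constructor
  · rintro ⟨x, ⟨hxs, -⟩, r, hr, hyx⟩
    have hyx : edist y x < infEDist x t := hyx.trans hr
    rw [infEDist_eq_of_edist_lt hyx]
    exact (infEDist_le_edist_of_mem hxs).trans_lt hyx
  · intro hy
    obtain ⟨x, hxs, hyx⟩ := infEDist_lt_iff.1 hy
    have hxt : infEDist x t = infEDist y t := infEDist_eq_of_edist_lt (by rwa [edist_comm])
    obtain ⟨r, hyr, hr⟩ := exists_between hyx
    refine ⟨x, ⟨hxs, fun hx => ?_⟩, r, hxt ▸ hr, hyr⟩
    rw [infEDist_zero_of_mem hx] at hxt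
    exact ENNReal.not_lt_zero (hxt ▸ hyx)

lemma isClosed_closure_union_setOf_infEDist_lt (s t : Set X) :
    IsClosed (closure s ∪ {y | infEDist y s < infEDist y t}) := by
  rw [← isOpen_compl_iff, EMetric.isOpen_iff]
  intro y hy
  simp only [Set.mem_compl_iff, Set.mem_union, not_or, Set.mem_ofPred_eq, not_lt] at hy
  obtain ⟨hys, hyt⟩ := hy
  have hpos : 0 < infEDist y s := infEDist_pos_iff_notMem_closure.2 hys
  refine ⟨infEDist y s, hpos, fun w hw => ?_⟩
  have hws : infEDist w s = infEDist y s := infEDist_eq_of_edist_lt hw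
  simp only [Set.mem_compl_iff, Set.mem_union, not_or, Set.mem_ofPred_eq, not_lt,
    mem_closure_iff_infEDist_zero, hws]
  exact ⟨hpos.ne', (infEDist_le_max t w y).trans (max_le hw.le hyt)⟩

lemma isClosed_iUnion_eball_infEDist_union_inter {s t : Set X} (hs : IsClosed s)
    (ht : IsClosed t) :
    IsClosed ((⋃ x ∈ s \ t, ⋃ r ∈ Set.Iio (infEDist x t), eball x r) ∪ (s ∩ t)) := by
  have hdiff : s \ t ⊆ {y | infEDist y s < infEDist y t} := fun y ⟨hys, hyt⟩ => by
    rw [Set.mem_ofPred_eq, infEDist_zero_of_mem hys]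
    exact infEDist_pos_iff_notMem_closure.2 (by rwa [ht.closure_eq])
  have hset : {y | infEDist y s < infEDist y t} ∪ (s ∩ t) =
      closure s ∪ {y | infEDist y s < infEDist y t} := by
    rw [hs.closure_eq]
    ext y
    have := @hdiff y
    simp only [Set.mem_union, Set.mem_inter_iff, Set.mem_sdiff] at this ⊢
    tauto
  rw [iUnion_eball_infEDist_eq, hset]
  exact isClosed_closure_union_setOf_infEDist_lt s t

end IsUltrametricDist

/-- For closed `A₁, A₂ ⊆ K^n` and `U₁` the union of all balls `B(x,r)` with
`x ∈ A₁ \ A₂`, `r < dist(x, A₂)`, the set `U₁ ∪ (A₁ ∩ A₂)` is closed. -/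
theorem U1_union_inter_closed {K : Type*} [NormedField K] [IsUltrametricDist K]
    {n : ℕ} (A₁ A₂ : Set (Fin n → K)) (h₁ : IsClosed A₁) (h₂ : IsClosed A₂) :
    IsClosed ((⋃ x ∈ A₁ \ A₂, ⋃ r ∈ Set.Iio (EMetric.infEdist x A₂), EMetric.ball x r)
      ∪ (A₁ ∩ A₂)) :=
  IsUltrametricDist.isClosed_iUnion_eball_infEDist_union_inter h₁ h₂
end

section
/- Let A₁, A₂ be closed in K^n, and suppose there exist continuous retractions r₁ : K^n → A₁ and r₂ : K^n → A₂. Then there exists a continuous retraction r : K^n → A₁ ∪ A₂. -/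
open Metric

/-- The sup metric on a finite product of ultrametric spaces is ultrametric. -/
instance pi_isUltrametricDist {ι : Type*} [Fintype ι] {X : ι → Type*}
    [∀ i, PseudoMetricSpace (X i)] [∀ i, IsUltrametricDist (X i)] :
    IsUltrametricDist (∀ i, X i) := by
  constructor
  intro x y z
  rw [dist_pi_le_iff (le_max_iff.2 (Or.inl dist_nonneg))]
  intro i
  calc dist (x i) (z i) ≤ max (dist (x i) (y i)) (dist (y i) (z i)) :=
        IsUltrametricDist.dist_triangle_max _ _ _
    _ ≤ max (dist x y) (dist y z) :=
        max_le_max (dist_le_pi_dist x y i) (dist_le_pi_dist y z i)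

/-- In an ultrametric space, if `dist x y < dist x s` then `dist y s = dist x s`. -/
lemma ultra_dist_eq {X : Type*} [PseudoMetricSpace X] [IsUltrametricDist X]
    {x y s : X} (h : dist x y < dist x s) : dist y s = dist x s := by
  apply le_antisymm
  · calc dist y s ≤ max (dist y x) (dist x s) := IsUltrametricDist.dist_triangle_max _ _ _
      _ = dist x s := max_eq_right (by rw [dist_comm]; exact h.le)
  · by_contra hlt
    push_neg at hlt
    have h2 : dist x s ≤ max (dist x y) (dist y s) := IsUltrametricDist.dist_triangle_max _ _ _
    have : max (dist x y) (dist y s) < dist x s := max_lt h hlt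
    exact absurd (h2.trans_lt this) (lt_irrefl _)

/-- In an ultrametric space, `infDist` is locally constant away from the set. -/
lemma ultra_infDist_eq {X : Type*} [PseudoMetricSpace X] [IsUltrametricDist X]
    {S : Set X} (_hS : S.Nonempty) {x y : X} (h : dist x y < infDist x S) :
    infDist y S = infDist x S := by
  have key : ∀ s : S, dist y (s : X) = dist x (s : X) := fun s =>
    ultra_dist_eq (h.trans_le (infDist_le_dist_of_mem s.2))
  rw [infDist_eq_iInf, infDist_eq_iInf]
  exact iInf_congr key

/-- If closed sets `A₁, A₂ ⊆ K^n` admit continuous retractions of `K^n` onto them,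
then so does `A₁ ∪ A₂`. -/
theorem exists_retraction_union {K : Type*} [NormedField K] [IsUltrametricDist K]
    {n : ℕ} (A₁ A₂ : Set (Fin n → K)) (h₁ : IsClosed A₁) (h₂ : IsClosed A₂)
    (r₁ : (Fin n → K) → (Fin n → K)) (hr₁ : Continuous r₁)
    (hr₁A : Set.range r₁ ⊆ A₁) (hr₁id : ∀ x ∈ A₁, r₁ x = x)
    (r₂ : (Fin n → K) → (Fin n → K)) (hr₂ : Continuous r₂)
    (hr₂A : Set.range r₂ ⊆ A₂) (hr₂id : ∀ x ∈ A₂, r₂ x = x) :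
    ∃ r : (Fin n → K) → (Fin n → K), Continuous r ∧
      Set.range r ⊆ A₁ ∪ A₂ ∧ ∀ x ∈ A₁ ∪ A₂, r x = x := by
  have hA₁ne : A₁.Nonempty := ⟨r₁ 0, hr₁A ⟨0, rfl⟩⟩
  have hA₂ne : A₂.Nonempty := ⟨r₂ 0, hr₂A ⟨0, rfl⟩⟩
  set f : (Fin n → K) → ℝ := fun x => infDist x A₁ with hf
  set g : (Fin n → K) → ℝ := fun x => infDist x A₂ with hg
  set r : (Fin n → K) → (Fin n → K) := fun x => if f x ≤ g x then r₁ x else r₂ x with hrdef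
  have hrange : Set.range r ⊆ A₁ ∪ A₂ := by
    rintro _ ⟨x, rfl⟩
    by_cases hc : f x ≤ g x
    · exact Or.inl (hr₁A ⟨x, (if_pos hc).symm⟩)
    · exact Or.inr (hr₂A ⟨x, (if_neg hc).symm⟩)
  have hid : ∀ x ∈ A₁ ∪ A₂, r x = x := by
    rintro x (hx | hx)
    · have hfx : f x = 0 := infDist_zero_of_mem hx
      have : f x ≤ g x := by rw [hfx]; exact infDist_nonneg
      rw [hrdef]; simp only [if_pos this]; exact hr₁id x hx
    · by_cases hx1 : x ∈ A₁
      · have hfx : f x = 0 := infDist_zero_of_mem hx1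
        have : f x ≤ g x := by rw [hfx]; exact infDist_nonneg
        rw [hrdef]; simp only [if_pos this]; exact hr₁id x hx1
      · have hgx : g x = 0 := infDist_zero_of_mem hx
        have hfx : 0 < f x := by
          rw [hf]
          exact (h₁.notMem_iff_infDist_pos hA₁ne).1 hx1
        have : ¬ f x ≤ g x := by rw [hgx]; exact not_le.2 hfx
        rw [hrdef]; simp only [if_neg this]; exact hr₂id x hx
  refine ⟨r, ?_, hrange, hid⟩
  rw [continuous_iff_continuousAt]
  intro x
  rcases lt_trichotomy (f x) (g x) with hlt | heq | hgt
  · -- f x < g x : locally r = r₁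
    have hfnn : (0:ℝ) ≤ f x := infDist_nonneg
    have hρ : 0 < min (g x) (g x - f x) := lt_min (hfnn.trans_lt hlt) (by linarith)
    have hev : ∀ y ∈ ball x (min (g x) (g x - f x)), r y = r₁ y := by
      intro y hy
      rw [mem_ball, dist_comm] at hy
      have h1 : dist x y < g x := hy.trans_le (min_le_left _ _)
      have hgy : g y = g x := ultra_infDist_eq hA₂ne h1
      have hfy : f y ≤ g y := by
        have := infDist_le_infDist_add_dist (x := y) (y := x) (s := A₁)
        have h2 : dist x y < g x - f x := hy.trans_le (min_le_right _ _)
        rw [hgy]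
        calc f y ≤ f x + dist y x := this
          _ ≤ g x := by rw [dist_comm]; linarith
      exact if_pos hfy
    have hee : r =ᶠ[nhds x] r₁ :=
      Filter.eventuallyEq_of_mem (ball_mem_nhds x hρ) (fun y hy => hev y hy)
    exact hr₁.continuousAt.congr hee.symm
  · -- f x = g x
    have hfnn : (0:ℝ) ≤ f x := infDist_nonneg
    rcases eq_or_lt_of_le hfnn with hzero | hpos
    · -- f x = g x = 0 : x ∈ A₁ ∩ A₂, direct ε-δ
      have hx1 : x ∈ A₁ := (h₁.mem_iff_infDist_zero hA₁ne).2 hzero.symm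
      have hx2 : x ∈ A₂ := (h₂.mem_iff_infDist_zero hA₂ne).2 (heq ▸ hzero.symm : g x = 0)
      have hrx : r x = x := hid x (Or.inl hx1)
      rw [Metric.continuousAt_iff]
      intro ε hε
      obtain ⟨δ₁, hδ₁, H₁⟩ := Metric.continuousAt_iff.1 hr₁.continuousAt ε hε
      obtain ⟨δ₂, hδ₂, H₂⟩ := Metric.continuousAt_iff.1 hr₂.continuousAt ε hε
      refine ⟨min δ₁ δ₂, lt_min hδ₁ hδ₂, fun {y} hy => ?_⟩
      rw [hrx]
      by_cases hc : f y ≤ g y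
      · have : r y = r₁ y := if_pos hc
        rw [this, ← hr₁id x hx1]
        exact H₁ (hy.trans_le (min_le_left _ _))
      · have : r y = r₂ y := if_neg hc
        rw [this, ← hr₂id x hx2]
        exact H₂ (hy.trans_le (min_le_right _ _))
    · -- f x = g x > 0 : locally both constant, r = r₁
      have hev : ∀ y ∈ ball x (f x), r y = r₁ y := by
        intro y hy
        rw [mem_ball, dist_comm] at hy
        have hfy : f y = f x := ultra_infDist_eq hA₁ne hy
        have hgy : g y = g x := ultra_infDist_eq hA₂ne (heq ▸ hy : dist x y < g x)
        exact if_pos (by rw [hfy, hgy, heq])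
      have hee : r =ᶠ[nhds x] r₁ :=
        Filter.eventuallyEq_of_mem (ball_mem_nhds x hpos) (fun y hy => hev y hy)
      exact hr₁.continuousAt.congr hee.symm
  · -- g x < f x : locally r = r₂
    have hρ : 0 < min (f x) (f x - g x) :=
      lt_min (infDist_nonneg.trans_lt hgt) (by linarith)
    have hev : ∀ y ∈ ball x (min (f x) (f x - g x)), r y = r₂ y := by
      intro y hy
      rw [mem_ball, dist_comm] at hy
      have h1 : dist x y < f x := hy.trans_le (min_le_left _ _)
      have hfy : f y = f x := ultra_infDist_eq hA₁ne h1
      have hgy : ¬ f y ≤ g y := by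
        have h3 : g y ≤ g x + dist y x := infDist_le_infDist_add_dist
        have h2 : dist x y < f x - g x := hy.trans_le (min_le_right _ _)
        rw [dist_comm] at h3
        rw [hfy]
        push_neg
        calc g y ≤ g x + dist x y := h3
          _ < f x := by linarith
      exact if_neg hgy
    have hee : r =ᶠ[nhds x] r₂ :=
      Filter.eventuallyEq_of_mem (ball_mem_nhds x hρ) (fun y hy => hev y hy)
    exact hr₂.continuousAt.congr hee.symm
end

section
/- Let A be closed in K^n, and suppose A ∩ B_I is the preimage under φ_I of the zero locus of a continuous function on K^n for every I ⊆ {1,…,n}. Then A is the zero locus of a continuous function on K^n. In particular, to prove that every closed (definable) set is a zero locus, one may assume the set is bounded. -/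
/-!
The coordinates of `x` lying in the closed unit ball form a finite set `unitCoords x`, and since
closed balls are clopen in an ultrametric space, `unitCoords` is locally constant. Gluing the
given functions along it, `x ↦ g_{I} (φ_I x)` with `I = unitCoords x`, gives a function which on
each (open) fiber of `unitCoords` is a continuous function composed with coordinatewise inversion
of nonzero coordinates, hence continuous, and whose zero locus is `A` piece by piece.
-/

open Filter Topology

theorem IsClopen.eventually_mem_iff {X : Type*} [TopologicalSpace X] {s : Set X}
    (hs : IsClopen s) (x : X) : ∀ᶠ y in 𝓝 x, (y ∈ s ↔ x ∈ s) := by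
  by_cases hx : x ∈ s
  · filter_upwards [hs.isOpen.mem_nhds hx] with y hy using iff_of_true hy hx
  · filter_upwards [hs.compl.isOpen.mem_nhds hx] with y hy using iff_of_false hy hx

theorem continuous_of_isLocallyConstant_of_continuousOn_fiber {X Y α : Type*}
    [TopologicalSpace X] [TopologicalSpace Y] {p : X → α} (hp : IsLocallyConstant p)
    {F : α → X → Y} (hF : ∀ a, ContinuousOn (F a) {x | p x = a}) :
    Continuous fun x => F (p x) x := by
  refine continuous_iff_continuousAt.2 fun x => ?_
  have hfiber : {y | p y = p x} ∈ 𝓝 x := (hp.isOpen_fiber (p x)).mem_nhds rfl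
  refine ((hF (p x)).continuousAt hfiber).congr ?_
  filter_upwards [hfiber] with y hy
  rw [hy]

section invertOutside

variable {ι K : Type*} [DecidableEq ι]

def invertOutside [Inv K] (I : Finset ι) (x : ι → K) : ι → K :=
  fun i => if i ∈ I then x i else (x i)⁻¹

theorem continuousOn_invertOutside [Zero K] [Inv K] [TopologicalSpace K] [ContinuousInv₀ K]
    (I : Finset ι) : ContinuousOn (invertOutside I) {x : ι → K | ∀ i ∉ I, x i ≠ 0} := by
  refine continuousOn_pi.2 fun i => ?_
  by_cases hi : i ∈ I
  · simpa only [invertOutside, hi, if_true] using (continuous_apply i).continuousOn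
  · simp only [invertOutside, hi, if_false]
    exact (continuous_apply i).continuousOn.inv₀ fun x hx => hx i hi

end invertOutside

section unitCoords

variable {ι E : Type*} [Fintype ι] [SeminormedAddGroup E]

noncomputable def unitCoords (x : ι → E) : Finset ι :=
  Finset.univ.filter fun i => ‖x i‖ ≤ 1

@[simp]
theorem mem_unitCoords {x : ι → E} {i : ι} : i ∈ unitCoords x ↔ ‖x i‖ ≤ 1 := by
  simp [unitCoords]

theorem unitCoords_spec [DecidableEq ι] (x : ι → E) (i : ι) :
    if i ∈ unitCoords x then ‖x i‖ ≤ 1 else 1 < ‖x i‖ := by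
  split_ifs with hi
  · exact mem_unitCoords.1 hi
  · exact lt_of_not_ge (mt mem_unitCoords.2 hi)

theorem isLocallyConstant_unitCoords [IsUltrametricDist E] :
    IsLocallyConstant (unitCoords : (ι → E) → Finset ι) := by
  refine (IsLocallyConstant.iff_eventually_eq _).2 fun x => ?_
  have hball : ∀ i, ∀ᶠ y in 𝓝 x, (‖y i‖ ≤ 1 ↔ ‖x i‖ ≤ 1) := fun i => by
    have hclopen : IsClopen ((fun y : ι → E => y i) ⁻¹' Metric.closedBall 0 1) :=
      (IsUltrametricDist.isClopen_closedBall 0 one_ne_zero).preimage (continuous_apply i)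
    simpa [mem_closedBall_zero_iff] using hclopen.eventually_mem_iff x
  filter_upwards [eventually_all.2 hball] with y hy
  ext i
  simp [hy i]

end unitCoords

theorem zeroLocus_from_clopen_pieces_general {K : Type*} [NormedField K]
    [IsUltrametricDist K] {n : ℕ} (A : Set (Fin n → K))
    (h : ∀ I : Finset (Fin n), ∃ g : (Fin n → K) → K, Continuous g ∧
      ∀ x ∈ {y : Fin n → K | ∀ i, if i ∈ I then ‖y i‖ ≤ 1 else 1 < ‖y i‖},
        (x ∈ A ↔ g (fun i => if i ∈ I then x i else (x i)⁻¹) = 0)) :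
    ∃ g : (Fin n → K) → K, Continuous g ∧ A = g ⁻¹' {0} := by
  choose g hg hgA using h
  refine ⟨fun x => g (unitCoords x) (invertOutside (unitCoords x) x), ?_, ?_⟩
  · refine continuous_of_isLocallyConstant_of_continuousOn_fiber isLocallyConstant_unitCoords
      fun I => (hg I).comp_continuousOn ((continuousOn_invertOutside I).mono ?_)
    rintro x rfl i hi
    exact norm_pos_iff.1 (one_pos.trans (by simpa [hi] using unitCoords_spec x i))
  · ext x
    exact hgA _ x (unitCoords_spec x)

/-- If, for every `I ⊆ {1,…,n}`, the piece `A ∩ B_I` of a closed set `A ⊆ K^n` is the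
preimage under `φ_I` of the zero locus of a continuous function on `K^n`, then `A`
itself is the zero locus of a continuous function on `K^n`. -/
theorem zeroLocus_from_clopen_pieces {K : Type*} [NormedField K]
    [IsUltrametricDist K] {n : ℕ} (A : Set (Fin n → K)) (hA : IsClosed A)
    (h : ∀ I : Finset (Fin n), ∃ g : (Fin n → K) → K, Continuous g ∧
      ∀ x ∈ {y : Fin n → K | ∀ i, if i ∈ I then ‖y i‖ ≤ 1 else 1 < ‖y i‖},
        (x ∈ A ↔ g (fun i => if i ∈ I then x i else (x i)⁻¹) = 0)) :
    ∃ g : (Fin n → K) → K, Continuous g ∧ A = g ⁻¹' {0} :=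
  zeroLocus_from_clopen_pieces_general A h
end
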